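/- Let H ∈ ℝ^{2n×2n} be nonsingular Hamiltonian, u ∈ ℝ^{2n} with ϑ := u^T J_n H u ≠ 0, and v = (1/ϑ) H u. Then v^T J_n H^{-1} u = 0, u^T J_n H^{-1} v = 0, and v^T J_n H^{-1} v = -1/ϑ. -/

import Mathlib

open Matrix

def Jmat (ι : Type) [DecidableEq ι] [Fintype ι] : Matrix (ι ⊕ ι) (ι ⊕ ι) ℝ :=
  Matrix.fromBlocks 0 1 (-1) 0

lemma Jmat_transpose (ι : Type) [DecidableEq ι] [Fintype ι] :
    (Jmat ι)ᵀ = -(Jmat ι) := by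
  ext i j
  cases i <;> cases j <;> simp [Jmat, Matrix.fromBlocks, Matrix.one_apply, eq_comm]

lemma Jmat_skew {ι : Type} [DecidableEq ι] [Fintype ι] (w : ι ⊕ ι → ℝ) :
    w ⬝ᵥ (Jmat ι *ᵥ w) = 0 := by
  have h : w ⬝ᵥ (Jmat ι *ᵥ w) = -(w ⬝ᵥ (Jmat ι *ᵥ w)) := by
    conv_lhs => rw [Matrix.dotProduct_mulVec, ← Matrix.mulVec_transpose,
      Jmat_transpose, Matrix.neg_mulVec, neg_dotProduct,
      dotProduct_comm]
  linarith

theorem projected_Hinv1 (n : ℕ)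
    (H : Matrix (Fin n ⊕ Fin n) (Fin n ⊕ Fin n) ℝ)
    (hH : (Jmat (Fin n) * H).IsSymm) (hdet : IsUnit H.det)
    (u : (Fin n ⊕ Fin n) → ℝ)
    (ϑ : ℝ) (hϑdef : ϑ = u ⬝ᵥ (Jmat (Fin n) *ᵥ (H *ᵥ u))) (hϑ : ϑ ≠ 0)
    (v : (Fin n ⊕ Fin n) → ℝ) (hv : v = (1/ϑ) • (H *ᵥ u)) :
    v ⬝ᵥ (Jmat (Fin n) *ᵥ (H⁻¹ *ᵥ u)) = 0 ∧
    u ⬝ᵥ (Jmat (Fin n) *ᵥ (H⁻¹ *ᵥ v)) = 0 ∧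
    v ⬝ᵥ (Jmat (Fin n) *ᵥ (H⁻¹ *ᵥ v)) = -1/ϑ := by
  set J := Jmat (Fin n) with hJ
  -- key: Hᵀ * J = -(J * H)
  have key : Hᵀ * J = -(J * H) := by
    have h1 : (J * H)ᵀ = J * H := hH
    calc Hᵀ * J = -(Hᵀ * Jᵀ) := by rw [Jmat_transpose]; simp [hJ]
    _ = -((J * H)ᵀ) := by rw [Matrix.transpose_mul]
    _ = -(J * H) := by rw [h1]
  have hHinvH : H⁻¹ *ᵥ (H *ᵥ u) = u := by
    rw [Matrix.mulVec_mulVec, Matrix.nonsing_inv_mul H hdet, Matrix.one_mulVec]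
  -- general: (H *ᵥ w) ⬝ᵥ (J *ᵥ x) = -(w ⬝ᵥ (J *ᵥ (H *ᵥ x)))
  have gen : ∀ w x : (Fin n ⊕ Fin n) → ℝ,
      (H *ᵥ w) ⬝ᵥ (J *ᵥ x) = -(w ⬝ᵥ ((J * H) *ᵥ x)) := by
    intro w x
    rw [← Matrix.vecMul_transpose H w, Matrix.dotProduct_mulVec,
      Matrix.vecMul_vecMul, key, Matrix.vecMul_neg, neg_dotProduct,
      ← Matrix.dotProduct_mulVec]
  have hHHinv : H *ᵥ (H⁻¹ *ᵥ u) = u := by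
    rw [Matrix.mulVec_mulVec, Matrix.mul_nonsing_inv H hdet, Matrix.one_mulVec]
  have hvu : H⁻¹ *ᵥ v = (1/ϑ) • u := by
    rw [hv, Matrix.mulVec_smul, hHinvH]
  refine ⟨?_, ?_, ?_⟩
  · rw [hv, smul_dotProduct, gen u (H⁻¹ *ᵥ u), ← Matrix.mulVec_mulVec,
      hHHinv]
    simp [hJ, Jmat_skew]
  · rw [hvu]
    simp [Matrix.mulVec_smul, dotProduct_smul, Jmat_skew, hJ]
  · rw [hvu, hv]
    rw [smul_dotProduct, Matrix.mulVec_smul, dotProduct_smul]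
    rw [gen u u, ← Matrix.mulVec_mulVec, ← hϑdef]
    simp only [smul_eq_mul]
    field_simp
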